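/- arXiv:0801.3415 — 3 statements merged into one kernel-verified Lean document; each statement's English description precedes it below -/
import Mathlib

section
/- With the notation and hypotheses of the context (the functions a, b, F, u on the free group F₂, the constant ε₁ > 0, and the means g_A(k), g_B(k)), the following hold for all m, n ∈ ℕ, m, n ≥ 1: (1) |A(m)|^{1/2} |B(n)|^{1/2} |g_A(m) − g_B(n)| ≤ (m+1)(n+1)(γ_m^{-1} + γ_n^{-1}) ε₁; (2) |B(n)|^{1/2} (Σ_{x∈A(m)} |u(x) − g_A(m)|²)^{1/2} ≤ (m+1)(n+1)(γ_m^{-1} + γ_n^{-1}) ε₁; (3) |A(m)|^{1/2} (Σ_{y∈B(n)} |u(y) − g_B(n)|²)^{1/2} ≤ (m+1)(n+1)(γ_m^{-1} + γ_n^{-1}) ε₁. -/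
noncomputable section

open scoped BigOperators

/-- The free group on two generators. -/
abbrev F₂ : Type := FreeGroup (Fin 2)

/-- The word length of an element of `F₂` (length of the reduced word). -/
abbrev wordLength (t : F₂) : ℕ := FreeGroup.norm t



lemma sqrt_sum_add_sq_le {ι : Type*} (s : Finset ι) (f g : ι → ℝ) :
    Real.sqrt (∑ i ∈ s, (f i + g i) ^ 2)
      ≤ Real.sqrt (∑ i ∈ s, f i ^ 2) + Real.sqrt (∑ i ∈ s, g i ^ 2) := by
  set X := Real.sqrt (∑ i ∈ s, f i ^ 2) with hX
  set Y := Real.sqrt (∑ i ∈ s, g i ^ 2) with hY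
  have hX0 : 0 ≤ X := Real.sqrt_nonneg _
  have hY0 : 0 ≤ Y := Real.sqrt_nonneg _
  have hXsq : X ^ 2 = ∑ i ∈ s, f i ^ 2 := Real.sq_sqrt (Finset.sum_nonneg fun i _ => sq_nonneg _)
  have hYsq : Y ^ 2 = ∑ i ∈ s, g i ^ 2 := Real.sq_sqrt (Finset.sum_nonneg fun i _ => sq_nonneg _)
  have hcs : ∑ i ∈ s, f i * g i ≤ X * Y := Real.sum_mul_le_sqrt_mul_sqrt s f g
  have hexp : ∑ i ∈ s, (f i + g i) ^ 2
      = (∑ i ∈ s, f i ^ 2) + 2 * (∑ i ∈ s, f i * g i) + ∑ i ∈ s, g i ^ 2 := by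
    rw [Finset.mul_sum, ← Finset.sum_add_distrib, ← Finset.sum_add_distrib]
    exact Finset.sum_congr rfl fun i _ => by ring
  have h1 : ∑ i ∈ s, (f i + g i) ^ 2 ≤ (X + Y) ^ 2 := by
    rw [hexp]; nlinarith
  calc Real.sqrt (∑ i ∈ s, (f i + g i) ^ 2) ≤ Real.sqrt ((X + Y) ^ 2) := Real.sqrt_le_sqrt h1
    _ = X + Y := Real.sqrt_sq (by positivity)

lemma mean_decomp {ι : Type*} (s : Finset ι) (u : ι → ℂ) (c g : ℂ)
    (hg : (s.card : ℂ) * g = ∑ p ∈ s, u p) :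
    ∑ p ∈ s, ‖c - u p‖ ^ 2
      = s.card * ‖c - g‖ ^ 2 + ∑ p ∈ s, ‖u p - g‖ ^ 2 := by
  have hz : ∑ p ∈ s, (u p - g) = 0 := by
    rw [Finset.sum_sub_distrib, Finset.sum_const, nsmul_eq_mul, ← hg, sub_self]
  simp_rw [Complex.sq_norm]
  have key : ∀ p, Complex.normSq (c - u p)
      = Complex.normSq (c - g) + Complex.normSq (u p - g)
        - 2 * ((c - g) * (starRingEnd ℂ) (u p - g)).re := fun p => by
    rw [show c - u p = (c - g) - (u p - g) by ring, Complex.normSq_sub]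
  rw [Finset.sum_congr rfl fun p _ => key p, Finset.sum_sub_distrib, Finset.sum_add_distrib,
    Finset.sum_const, nsmul_eq_mul]
  have h0 : ∑ p ∈ s, 2 * ((c - g) * (starRingEnd ℂ) (u p - g)).re = 0 := by
    rw [← Finset.mul_sum, ← Complex.re_sum, ← Finset.mul_sum, ← map_sum, hz, map_zero, mul_zero,
      Complex.zero_re, mul_zero]
  rw [h0]; ring

set_option maxHeartbeats 1600000 in
/-- **Statement 10** (Proposition 4.9 of the paper).  With the sphere `S n` of radius `n`
in `F₂` partitioned as `S n = A n ⊔ B n` with `|A n| = |B n| = 2 ⬝ 3^(n-1)`, weights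
`γ n > 0` with `∑ γ n ^ 2 |S n| < ∞`, the functions `a = ∑ γ_m 1_{A m}`,
`b = ∑ γ_n 1_{B n}`, a finitely supported `F : F₂ × F₂ → ℂ` with diagonal `u x = F x x`
satisfying `‖a⬝F - F⬝a - a ⊗ u + u ⊗ a‖_{ω×ω} ≤ ε₁` and
`‖b⬝F - F⬝b - b ⊗ u + u ⊗ b‖_{ω×ω} ≤ ε₁`, and with
`g_A k`, `g_B k` the means of `u` over `A k`, `B k`, one has, for all `m, n ≥ 1`:
(1) `|A m|^{1/2} |B n|^{1/2} |g_A m - g_B n| ≤ (m+1)(n+1)(γ_m⁻¹ + γ_n⁻¹) ε₁`;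
(2) `|B n|^{1/2} (∑_{x ∈ A m} |u x - g_A m|²)^{1/2} ≤ (m+1)(n+1)(γ_m⁻¹ + γ_n⁻¹) ε₁`;
(3) `|A m|^{1/2} (∑_{y ∈ B n} |u y - g_B n|²)^{1/2} ≤ (m+1)(n+1)(γ_m⁻¹ + γ_n⁻¹) ε₁`. -/
theorem almost_constant_means
    (S A B : ℕ → Finset F₂)
    (hS : ∀ (n : ℕ) (t : F₂), t ∈ S n ↔ wordLength t = n)
    (hdisj : ∀ n, 1 ≤ n → Disjoint (A n) (B n))
    (hunion : ∀ n, 1 ≤ n → A n ∪ B n = S n)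
    (hcardA : ∀ n, 1 ≤ n → (A n).card = 2 * 3 ^ (n - 1))
    (hcardB : ∀ n, 1 ≤ n → (B n).card = 2 * 3 ^ (n - 1))
    (γ : ℕ → ℝ) (hγ : ∀ n, 1 ≤ n → 0 < γ n)
    (hγsum : Summable (fun n : ℕ => γ (n + 1) ^ 2 * ((S (n + 1)).card : ℝ)))
    -- `a = ∑_{m ≥ 1} γ_m 1_{A m}` and `b = ∑_{n ≥ 1} γ_n 1_{B n}`:
    (a b : F₂ → ℝ)
    (haA : ∀ m, 1 ≤ m → ∀ t ∈ A m, a t = γ m)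
    (haA' : ∀ t : F₂, (∀ m, 1 ≤ m → t ∉ A m) → a t = 0)
    (hbB : ∀ n, 1 ≤ n → ∀ t ∈ B n, b t = γ n)
    (hbB' : ∀ t : F₂, (∀ n, 1 ≤ n → t ∉ B n) → b t = 0)
    -- a finitely supported `F` with diagonal `u`:
    (F : F₂ → F₂ → ℂ) (hF : {p : F₂ × F₂ | F p.1 p.2 ≠ 0}.Finite)
    (u : F₂ → ℂ) (hu : ∀ x, u x = F x x)
    -- the `‖·‖_{ω×ω}`-estimates on `a⬝F - F⬝a - a ⊗ u + u ⊗ a` and its `b`-analogue: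
    (ε₁ : ℝ) (hε : 0 < ε₁)
    (hna : ∀ m n : ℕ,
      Real.sqrt (∑ x ∈ S m, ∑ y ∈ S n,
          ‖(a x : ℂ) * F x y - (a y : ℂ) * F x y
            - (a x : ℂ) * u y + (u x) * (a y : ℂ)‖ ^ 2)
        ≤ (m + 1) * (n + 1) * ε₁)
    (hnb : ∀ m n : ℕ,
      Real.sqrt (∑ x ∈ S m, ∑ y ∈ S n,
          ‖(b x : ℂ) * F x y - (b y : ℂ) * F x y
            - (b x : ℂ) * u y + (u x) * (b y : ℂ)‖ ^ 2)
        ≤ (m + 1) * (n + 1) * ε₁)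
    -- the means of `u` over `A k` and `B k`:
    (gA gB : ℕ → ℂ)
    (hgA : ∀ k, gA k = (∑ p ∈ A k, u p) / ((A k).card : ℂ))
    (hgB : ∀ k, gB k = (∑ q ∈ B k, u q) / ((B k).card : ℂ)) :
    ∀ m n : ℕ, 1 ≤ m → 1 ≤ n →
      (Real.sqrt ((A m).card) * Real.sqrt ((B n).card) * ‖gA m - gB n‖
          ≤ (m + 1) * (n + 1) * ((γ m)⁻¹ + (γ n)⁻¹) * ε₁) ∧
      (Real.sqrt ((B n).card) *
            Real.sqrt (∑ x ∈ A m, ‖u x - gA m‖ ^ 2)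
          ≤ (m + 1) * (n + 1) * ((γ m)⁻¹ + (γ n)⁻¹) * ε₁) ∧
      (Real.sqrt ((A m).card) *
            Real.sqrt (∑ y ∈ B n, ‖u y - gB n‖ ^ 2)
          ≤ (m + 1) * (n + 1) * ((γ m)⁻¹ + (γ n)⁻¹) * ε₁) := by
  
  intro m n hm hn
  have hAS : A m ⊆ S m := (hunion m hm) ▸ Finset.subset_union_left
  have hBS : B n ⊆ S n := (hunion n hn) ▸ Finset.subset_union_right
  have ha0 : ∀ y ∈ B n, a y = 0 := by
    intro y hy
    apply haA'
    intro k hk hyk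
    have h1 : wordLength y = n := (hS n y).1 (hBS hy)
    have hAkS : A k ⊆ S k := (hunion k hk) ▸ Finset.subset_union_left
    have h2 : wordLength y = k := (hS k y).1 (hAkS hyk)
    have hkn : k = n := by omega
    subst hkn
    exact (Finset.disjoint_left.1 (hdisj k hk)) hyk hy
  have hb0 : ∀ x ∈ A m, b x = 0 := by
    intro x hx
    apply hbB'
    intro k hk hxk
    have h1 : wordLength x = m := (hS m x).1 (hAS hx)
    have hBkS : B k ⊆ S k := (hunion k hk) ▸ Finset.subset_union_right
    have h2 : wordLength x = k := (hS k x).1 (hBkS hxk)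
    have hkm : k = m := by omega
    subst hkm
    exact (Finset.disjoint_left.1 (hdisj k hk)) hx hxk
  have hγm := hγ m hm
  have hγn := hγ n hn
  set X : ℝ := (m + 1) * (n + 1) * ε₁ with hXdef
  have hX0 : 0 ≤ X := by positivity
  set Q : ℝ := ∑ x ∈ A m, ∑ y ∈ B n, ‖F x y - u y‖ ^ 2 with hQdef
  set P : ℝ := ∑ x ∈ A m, ∑ y ∈ B n, ‖u x - F x y‖ ^ 2 with hPdef
  have hQ0 : 0 ≤ Q := Finset.sum_nonneg fun x _ => Finset.sum_nonneg fun y _ => sq_nonneg _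
  have hP0 : 0 ≤ P := Finset.sum_nonneg fun x _ => Finset.sum_nonneg fun y _ => sq_nonneg _
  -- bound the restricted a-sum
  have hsubQ : γ m ^ 2 * Q = ∑ x ∈ A m, ∑ y ∈ B n,
      ‖(a x : ℂ) * F x y - (a y : ℂ) * F x y
        - (a x : ℂ) * u y + (u x) * (a y : ℂ)‖ ^ 2 := by
    rw [hQdef, Finset.mul_sum]
    refine Finset.sum_congr rfl fun x hx => ?_
    rw [Finset.mul_sum]
    refine Finset.sum_congr rfl fun y hy => ?_
    rw [haA m hm x hx, ha0 y hy]
    have e : ((γ m : ℝ) : ℂ) * F x y - ((0 : ℝ) : ℂ) * F x y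
        - ((γ m : ℝ) : ℂ) * u y + u x * ((0 : ℝ) : ℂ) = (γ m : ℂ) * (F x y - u y) := by
      push_cast; ring
    rw [e, norm_mul, mul_pow, Complex.norm_real, Real.norm_eq_abs, sq_abs]
  have hsubP : γ n ^ 2 * P = ∑ x ∈ A m, ∑ y ∈ B n,
      ‖(b x : ℂ) * F x y - (b y : ℂ) * F x y
        - (b x : ℂ) * u y + (u x) * (b y : ℂ)‖ ^ 2 := by
    rw [hPdef, Finset.mul_sum]
    refine Finset.sum_congr rfl fun x hx => ?_
    rw [Finset.mul_sum]
    refine Finset.sum_congr rfl fun y hy => ?_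
    rw [hb0 x hx, hbB n hn y hy]
    have e : ((0 : ℝ) : ℂ) * F x y - ((γ n : ℝ) : ℂ) * F x y
        - ((0 : ℝ) : ℂ) * u y + u x * ((γ n : ℝ) : ℂ) = (γ n : ℂ) * (u x - F x y) := by
      push_cast; ring
    rw [e, norm_mul, mul_pow, Complex.norm_real, Real.norm_eq_abs, sq_abs]
  have sqrt_bound : ∀ (γ₀ : ℝ), 0 < γ₀ → ∀ (T : ℝ), 0 ≤ T → γ₀ ^ 2 * T ≤ X ^ 2 →
      Real.sqrt T ≤ γ₀⁻¹ * X := by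
    intro γ₀ hγ₀ T hT0 hT
    have h5 : T ≤ (γ₀⁻¹ * X) ^ 2 := by
      have h6 := mul_le_mul_of_nonneg_left hT (sq_nonneg γ₀⁻¹)
      calc T = γ₀⁻¹ ^ 2 * (γ₀ ^ 2 * T) := by field_simp
        _ ≤ γ₀⁻¹ ^ 2 * X ^ 2 := h6
        _ = (γ₀⁻¹ * X) ^ 2 := by ring
    calc Real.sqrt T ≤ Real.sqrt ((γ₀⁻¹ * X) ^ 2) := Real.sqrt_le_sqrt h5
      _ = γ₀⁻¹ * X := Real.sqrt_sq (by positivity)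
  have hbig : ∀ (G : F₂ → F₂ → ℝ), (∀ x y, 0 ≤ G x y) →
      ∑ x ∈ A m, ∑ y ∈ B n, G x y ≤ ∑ x ∈ S m, ∑ y ∈ S n, G x y := by
    intro G hG
    refine le_trans (Finset.sum_le_sum fun x _ =>
      Finset.sum_le_sum_of_subset_of_nonneg hBS (fun y _ _ => hG x y)) ?_
    exact Finset.sum_le_sum_of_subset_of_nonneg hAS
      (fun x _ _ => Finset.sum_nonneg fun y _ => hG x y)
  have hsq_of : ∀ (T : ℝ), 0 ≤ T → Real.sqrt T ≤ X → T ≤ X ^ 2 := by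
    intro T hT0 hT
    have := Real.sq_sqrt hT0
    nlinarith [Real.sqrt_nonneg T]
  have hQX : Real.sqrt Q ≤ (γ m)⁻¹ * X := by
    refine sqrt_bound (γ m) hγm Q hQ0 ?_
    rw [hsubQ]
    refine le_trans (hbig _ fun x y => sq_nonneg _) ?_
    refine hsq_of _ (Finset.sum_nonneg fun x _ => Finset.sum_nonneg fun y _ => sq_nonneg _) ?_
    exact hna m n
  have hPX : Real.sqrt P ≤ (γ n)⁻¹ * X := by
    refine sqrt_bound (γ n) hγn P hP0 ?_
    rw [hsubP]
    refine le_trans (hbig _ fun x y => sq_nonneg _) ?_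
    refine hsq_of _ (Finset.sum_nonneg fun x _ => Finset.sum_nonneg fun y _ => sq_nonneg _) ?_
    exact hnb m n
  -- the double-difference sum
  set SAB : ℝ := ∑ x ∈ A m, ∑ y ∈ B n, ‖u x - u y‖ ^ 2 with hSABdef
  have hSAB0 : 0 ≤ SAB := Finset.sum_nonneg fun x _ => Finset.sum_nonneg fun y _ => sq_nonneg _
  have hD : Real.sqrt SAB ≤ (m + 1) * (n + 1) * ((γ m)⁻¹ + (γ n)⁻¹) * ε₁ := by
    have hprod : SAB = ∑ p ∈ (A m) ×ˢ (B n), ‖u p.1 - u p.2‖ ^ 2 := by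
      rw [hSABdef, Finset.sum_product]
    have hptw : SAB ≤ ∑ p ∈ (A m) ×ˢ (B n),
        (‖u p.1 - F p.1 p.2‖ + ‖F p.1 p.2 - u p.2‖) ^ 2 := by
      rw [hprod]
      refine Finset.sum_le_sum fun p _ => ?_
      refine pow_le_pow_left₀ (norm_nonneg _) ?_ 2
      have e : u p.1 - u p.2 = (u p.1 - F p.1 p.2) + (F p.1 p.2 - u p.2) := by ring
      rw [e]; exact norm_add_le _ _
    have hmink := sqrt_sum_add_sq_le ((A m) ×ˢ (B n))
      (fun p => ‖u p.1 - F p.1 p.2‖) (fun p => ‖F p.1 p.2 - u p.2‖)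
    have hPprod : ∑ p ∈ (A m) ×ˢ (B n), ‖u p.1 - F p.1 p.2‖ ^ 2 = P := by
      rw [hPdef, Finset.sum_product]
    have hQprod : ∑ p ∈ (A m) ×ˢ (B n), ‖F p.1 p.2 - u p.2‖ ^ 2 = Q := by
      rw [hQdef, Finset.sum_product]
    calc Real.sqrt SAB ≤ Real.sqrt (∑ p ∈ (A m) ×ˢ (B n),
          (‖u p.1 - F p.1 p.2‖ + ‖F p.1 p.2 - u p.2‖) ^ 2) :=
        Real.sqrt_le_sqrt hptw
      _ ≤ Real.sqrt P + Real.sqrt Q := by rw [← hPprod, ← hQprod]; exact hmink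
      _ ≤ (γ n)⁻¹ * X + (γ m)⁻¹ * X := add_le_add hPX hQX
      _ = (m + 1) * (n + 1) * ((γ m)⁻¹ + (γ n)⁻¹) * ε₁ := by rw [hXdef]; ring
  -- the mean decomposition
  have hAcard0 : (0:ℝ) < (A m).card := by
    rw [hcardA m hm]; positivity
  have hBcard0 : (0:ℝ) < (B n).card := by
    rw [hcardB n hn]; positivity
  have hgAeq : ((A m).card : ℂ) * gA m = ∑ p ∈ A m, u p := by
    rw [hgA m]
    have : ((A m).card : ℂ) ≠ 0 := by
      exact_mod_cast ne_of_gt hAcard0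
    field_simp
  have hgBeq : ((B n).card : ℂ) * gB n = ∑ q ∈ B n, u q := by
    rw [hgB n]
    have : ((B n).card : ℂ) ≠ 0 := by
      exact_mod_cast ne_of_gt hBcard0
    field_simp
  set VA : ℝ := ∑ x ∈ A m, ‖u x - gA m‖ ^ 2 with hVAdef
  set VB : ℝ := ∑ y ∈ B n, ‖u y - gB n‖ ^ 2 with hVBdef
  have hVA0 : 0 ≤ VA := Finset.sum_nonneg fun x _ => sq_nonneg _
  have hVB0 : 0 ≤ VB := Finset.sum_nonneg fun y _ => sq_nonneg _
  have hident : SAB = (A m).card * (B n).card * ‖gA m - gB n‖ ^ 2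
      + (B n).card * VA + (A m).card * VB := by
    have step1 : SAB = ∑ x ∈ A m,
        ((B n).card * ‖u x - gB n‖ ^ 2 + VB) := by
      rw [hSABdef]
      exact Finset.sum_congr rfl fun x _ => mean_decomp (B n) u (u x) (gB n) hgBeq
    have step2 : ∑ x ∈ A m, ‖u x - gB n‖ ^ 2
        = (A m).card * ‖gA m - gB n‖ ^ 2 + VA := by
      have e1 : ∑ x ∈ A m, ‖u x - gB n‖ ^ 2
          = ∑ x ∈ A m, ‖gB n - u x‖ ^ 2 :=
        Finset.sum_congr rfl fun x _ => by rw [norm_sub_rev]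
      rw [e1, mean_decomp (A m) u (gB n) (gA m) hgAeq, norm_sub_rev, hVAdef]
    rw [step1, Finset.sum_add_distrib, Finset.sum_const, nsmul_eq_mul, ← Finset.mul_sum,
      step2]
    ring
  have habs0 : 0 ≤ ‖gA m - gB n‖ := norm_nonneg _
  refine ⟨?_, ?_, ?_⟩
  · have e : Real.sqrt ((A m).card) * Real.sqrt ((B n).card) * ‖gA m - gB n‖
        = Real.sqrt ((A m).card * ((B n).card * ‖gA m - gB n‖ ^ 2)) := by
      rw [Real.sqrt_mul hAcard0.le, Real.sqrt_mul hBcard0.le,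
        Real.sqrt_sq habs0, mul_assoc]
    rw [e]
    refine le_trans (le_trans (Real.sqrt_le_sqrt ?_) hD) le_rfl
    nlinarith [mul_nonneg hBcard0.le hVA0, mul_nonneg hAcard0.le hVB0]
  · have e : Real.sqrt ((B n).card) * Real.sqrt VA = Real.sqrt ((B n).card * VA) :=
      (Real.sqrt_mul hBcard0.le _).symm
    rw [e]
    refine le_trans (Real.sqrt_le_sqrt ?_) hD
    linarith [hident, mul_nonneg (mul_nonneg hAcard0.le hBcard0.le)
      (sq_nonneg (‖gA m - gB n‖)), mul_nonneg hAcard0.le hVB0]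
  · have e : Real.sqrt ((A m).card) * Real.sqrt VB = Real.sqrt ((A m).card * VB) :=
      (Real.sqrt_mul hAcard0.le _).symm
    rw [e]
    refine le_trans (Real.sqrt_le_sqrt ?_) hD
    linarith [hident, mul_nonneg (mul_nonneg hAcard0.le hBcard0.le)
      (sq_nonneg (‖gA m - gB n‖)), mul_nonneg hBcard0.le hVA0]
end
end

section
/- Let G be a locally compact group equipped with a left Haar measure, and give G×G the product Haar measure λ. Suppose there exists M ∈ L¹(G×G, λ) with M ≠ 0 such that for every x ∈ G the complex measure M dλ on G×G is invariant under the homeomorphism (s, t) ↦ (xs, t x⁻¹) (i.e. its pushforward under this map equals itself). Then G is compact. -/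
open MeasureTheory
open scoped ENNReal NNReal Pointwise

/-- Auxiliary: in a noncompact topological group, for any compact set `D` one can find,
for every `N`, a sequence of points whose pairwise "quotients" avoid `D`. -/
lemma aux_sep_of_noncompact {G : Type*} [Group G] [TopologicalSpace G] [IsTopologicalGroup G]
    (hnc : ¬CompactSpace G) (D : Set G) (hD : IsCompact D) :
    ∀ N : ℕ, ∃ x : ℕ → G, ∀ i j : ℕ, i < j → j < N → x j * (x i)⁻¹ ∉ D := by
  intro N
  induction N with
  | zero => exact ⟨fun _ => 1, by omega⟩
  | succ n ih =>
    obtain ⟨x, hx⟩ := ih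
    have hS : IsCompact (⋃ i : Fin n, (fun d => d * x i) '' D) :=
      isCompact_iUnion fun i => hD.image (continuous_mul_right _)
    obtain ⟨y, hy⟩ : ∃ y, y ∉ ⋃ i : Fin n, (fun d => d * x i) '' D := by
      by_contra h
      push_neg at h
      have huniv : (⋃ i : Fin n, (fun d => d * x i) '' D) = Set.univ :=
        Set.eq_univ_of_forall h
      exact hnc (isCompact_univ_iff.mp (huniv ▸ hS))
    refine ⟨Function.update x n y, fun i j hij hjn => ?_⟩
    rcases Nat.lt_succ_iff_lt_or_eq.mp hjn with hj | rfl
    · rw [Function.update_of_ne (by omega), Function.update_of_ne (by omega)]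
      exact hx i j hij hj
    · rw [Function.update_self, Function.update_of_ne (by omega)]
      intro hmem
      exact hy (Set.mem_iUnion.2 ⟨⟨i, hij⟩, ⟨_, hmem, by group⟩⟩)

/-- **Statement 12.** Let `G` be a locally compact group with a left Haar measure `μ`,
and let `λ = μ.prod μ` be the product Haar measure on `G × G`.  Suppose there is a
nonzero `M ∈ L¹(G × G, λ)` such that for every `x ∈ G` the complex measure `M dλ` is
invariant under the homeomorphism `(s, t) ↦ (x s, t x⁻¹)` (its pushforward under this
map equals itself, i.e. the integral of `M` over `Φ⁻¹(E)` equals that over `E` for every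
measurable `E`).  Then `G` is compact. -/
theorem compact_of_conjugation_invariant_L1_density
    (G : Type*) [Group G] [TopologicalSpace G] [IsTopologicalGroup G]
    [LocallyCompactSpace G] [MeasurableSpace G] [BorelSpace G]
    (μ : Measure G) [μ.IsHaarMeasure] [μ.Regular]
    (M : G × G → ℂ)
    (hM : Integrable M (μ.prod μ))
    (hMne : ¬ M =ᵐ[μ.prod μ] 0)
    (hinv : ∀ (x : G) (E : Set (G × G)), MeasurableSet E →
      ∫ p in (fun p : G × G => (x * p.1, p.2 * x⁻¹)) ⁻¹' E, M p ∂(μ.prod μ) =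
        ∫ p in E, M p ∂(μ.prod μ)) :
    CompactSpace G := by
  by_contra hnc
  -- a strongly measurable representative of `M`
  obtain ⟨M', hM'sm, hMM'⟩ : ∃ M', StronglyMeasurable M' ∧ M =ᵐ[μ.prod μ] M' :=
    ⟨hM.1.mk M, hM.1.stronglyMeasurable_mk, hM.1.ae_eq_mk⟩
  have hM'meas : Measurable fun p : G × G => (‖M' p‖₊ : ℝ≥0∞) := hM'sm.measurable.enorm
  -- the finite measure with density `‖M‖` w.r.t. the product measure
  set ρ : Measure (G × G) := (μ.prod μ).withDensity (fun p => (‖M' p‖₊ : ℝ≥0∞)) with hρdef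
  have hρ_apply : ∀ S : Set (G × G), MeasurableSet S →
      ρ S = ∫⁻ p in S, (‖M' p‖₊ : ℝ≥0∞) ∂(μ.prod μ) := fun S hS => withDensity_apply _ hS
  have hρuniv : ρ Set.univ ≠ ⊤ := by
    rw [hρ_apply Set.univ MeasurableSet.univ, Measure.restrict_univ]
    have h1 : ∫⁻ p, (‖M' p‖₊ : ℝ≥0∞) ∂(μ.prod μ) = ∫⁻ p, (‖M p‖₊ : ℝ≥0∞) ∂(μ.prod μ) := by
      apply lintegral_congr_ae
      filter_upwards [hMM'] with p hp
      rw [hp]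
    rw [h1]
    exact hM.2.ne
  -- the norm of a set integral of `M` is dominated by `ρ`
  have key_norm : ∀ S : Set (G × G), MeasurableSet S →
      (‖∫ p in S, M p ∂(μ.prod μ)‖₊ : ℝ≥0∞) ≤ ρ S := by
    intro S hS
    rw [integral_congr_ae (ae_restrict_of_ae hMM')]
    calc (‖∫ p in S, M' p ∂(μ.prod μ)‖₊ : ℝ≥0∞)
        ≤ ∫⁻ p in S, (‖M' p‖₊ : ℝ≥0∞) ∂(μ.prod μ) := enorm_integral_le_lintegral_enorm _
      _ = ρ S := (hρ_apply S hS).symm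
  -- find a set of finite measure where the integral of `M` does not vanish
  have hex : ¬ ∀ S : Set (G × G), MeasurableSet S → μ.prod μ S < ⊤ →
      ∫ p in S, M p ∂(μ.prod μ) = 0 :=
    fun h => hMne (hM.ae_eq_zero_of_forall_setIntegral_eq_zero h)
  push_neg at hex
  obtain ⟨S₀, hS₀m, -, hI₀⟩ := hex
  set I₀ : ℂ := ∫ p in S₀, M p ∂(μ.prod μ) with hI₀def
  -- the kernel defining the product measure
  set g : G → Measure (G × G) := fun x => Measure.map (Prod.mk x) μ with hgdef
  by_cases hg : AEMeasurable g μ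
  swap
  · -- if the kernel is not a.e. measurable, the product measure is zero, contradicting `hMne`
    have hzero : μ.prod μ = 0 := by
      rw [Measure.prod_def]
      show Measure.join (Measure.map g μ) = 0
      rw [Measure.map_of_not_aemeasurable hg, Measure.join_zero]
    exact hMne (by rw [hzero]; simp [Filter.EventuallyEq])
  -- the key slicing identity for lintegrals over the product measure
  have key : ∀ F : G × G → ℝ≥0∞, Measurable F →
      ∫⁻ p, F p ∂(μ.prod μ) = ∫⁻ x, ∫⁻ t, F (x, t) ∂μ ∂μ := by
    intro F hF
    have hbind : μ.prod μ = Measure.bind μ (hg.mk g) := by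
      rw [Measure.prod_def]
      show Measure.join (Measure.map g μ) = _
      rw [Measure.map_congr hg.ae_eq_mk]
      rfl
    rw [hbind, Measure.lintegral_bind hg.measurable_mk.aemeasurable hF.aemeasurable]
    apply lintegral_congr_ae
    filter_upwards [hg.ae_eq_mk] with x hx
    rw [← hx]
    show ∫⁻ p, F p ∂(Measure.map (Prod.mk x) μ) = _
    rw [lintegral_map hF measurable_prodMk_left]
  -- the first-coordinate density
  set mt : G → ℝ≥0∞ := fun x => ∫⁻ t, (‖M' (x, t)‖₊ : ℝ≥0∞) ∂μ with hmtdef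
  have hmtae : AEMeasurable mt μ := by
    have h1 : Measurable fun x => ∫⁻ p, (‖M' p‖₊ : ℝ≥0∞) ∂(hg.mk g x) :=
      (Measure.measurable_lintegral hM'meas).comp hg.measurable_mk
    refine h1.aemeasurable.congr ?_
    filter_upwards [hg.ae_eq_mk] with x hx
    rw [← hx]
    show ∫⁻ p, (‖M' p‖₊ : ℝ≥0∞) ∂(Measure.map (Prod.mk x) μ) = mt x
    rw [lintegral_map hM'meas measurable_prodMk_left]
  have hslice : ∀ B : Set G, MeasurableSet B →
      ρ (B ×ˢ (Set.univ : Set G)) = ∫⁻ x in B, mt x ∂μ := by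
    intro B hB
    have hBu : MeasurableSet (B ×ˢ (Set.univ : Set G)) := hB.prod MeasurableSet.univ
    rw [hρ_apply _ hBu, ← lintegral_indicator hBu,
      key _ (hM'meas.indicator hBu), ← lintegral_indicator hB]
    congr 1 with x
    by_cases hx : x ∈ B
    · have : ∀ t : G, (B ×ˢ (Set.univ : Set G)).indicator
          (fun p : G × G => (‖M' p‖₊ : ℝ≥0∞)) (x, t) = (‖M' (x, t)‖₊ : ℝ≥0∞) := by
        intro t
        rw [Set.indicator_of_mem (by exact ⟨hx, trivial⟩)]
      simp only [this, Set.indicator_of_mem hx]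
      rfl
    · have : ∀ t : G, (B ×ˢ (Set.univ : Set G)).indicator
          (fun p : G × G => (‖M' p‖₊ : ℝ≥0∞)) (x, t) = 0 := by
        intro t
        rw [Set.indicator_of_notMem (fun hmem => hx hmem.1)]
      simp only [this, Set.indicator_of_notMem hx, lintegral_zero]
  have hmtfin : ∫⁻ x, mt x ∂μ ≠ ⊤ := by
    have := hslice Set.univ MeasurableSet.univ
    rw [Set.univ_prod_univ, Measure.restrict_univ] at this
    rw [← this]
    exact hρuniv
  -- tightness in the first coordinate: a compact set capturing most of the mass of `ρ`
  have hI₀n : (‖I₀‖₊ : ℝ≥0∞) ≠ 0 := by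
    simp only [ne_eq, ENNReal.coe_eq_zero, nnnorm_eq_zero]
    exact hI₀
  set ε : ℝ≥0∞ := (‖I₀‖₊ : ℝ≥0∞) / 2 with hεdef
  have hε : ε ≠ 0 := (ENNReal.half_pos hI₀n).ne'
  have hεtop : ε ≠ ⊤ := by
    rw [hεdef]
    exact (ENNReal.div_lt_top ENNReal.coe_ne_top (by norm_num)).ne
  have hε2 : ε / 2 ≠ 0 := (ENNReal.half_pos hε).ne'
  have hε2top : ε / 2 ≠ ⊤ := ne_top_of_le_ne_top hεtop ENNReal.half_le_self
  set mt' : G → ℝ≥0∞ := hmtae.mk mt with hmt'def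
  have hmt'meas : Measurable mt' := hmtae.measurable_mk
  have hmtmt' : mt =ᵐ[μ] mt' := hmtae.ae_eq_mk
  set T : ℝ≥0∞ := ∫⁻ x, mt' x ∂μ with hTdef
  have hT : T ≠ ⊤ := by
    rw [hTdef, ← lintegral_congr_ae hmtmt']
    exact hmtfin
  obtain ⟨δ, hδ0, hδ⟩ := exists_pos_setLIntegral_lt_of_measure_lt hT hε2
  set A : ℕ → Set G := fun n => {x | ((n : ℝ≥0∞) + 1)⁻¹ < mt' x} with hAdef
  have hAm : ∀ n, MeasurableSet (A n) := fun n => measurableSet_lt measurable_const hmt'meas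
  have hAmono : Monotone A := by
    intro a b hab x hx
    refine lt_of_le_of_lt (ENNReal.inv_le_inv.mpr ?_) hx
    have h : (a : ℝ≥0∞) ≤ b := by exact_mod_cast hab
    exact add_le_add_left h 1
  have hsup : T = ⨆ n, ∫⁻ x in A n, mt' x ∂μ := by
    have h1 : ∀ x, (⨆ n, (A n).indicator mt' x) = mt' x := by
      intro x
      apply le_antisymm
      · exact iSup_le fun n => Set.indicator_le_self _ _ x
      · by_cases hx : mt' x = 0
        · rw [hx]; exact zero_le
        · obtain ⟨n, hn⟩ := ENNReal.exists_inv_nat_lt hx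
          have hxA : x ∈ A n := by
            have : ((n : ℝ≥0∞) + 1)⁻¹ ≤ ((n : ℝ≥0∞))⁻¹ := ENNReal.inv_le_inv.mpr le_self_add
            exact lt_of_le_of_lt this hn
          exact le_iSup_of_le n (le_of_eq (Set.indicator_of_mem hxA mt').symm)
    calc T = ∫⁻ x, ⨆ n, (A n).indicator mt' x ∂μ := lintegral_congr fun x => (h1 x).symm
      _ = ⨆ n, ∫⁻ x, (A n).indicator mt' x ∂μ := by
          apply lintegral_iSup (fun n => hmt'meas.indicator (hAm n))
          intro a b hab x
          exact Set.indicator_le_indicator_of_subset (hAmono hab) (fun _ => zero_le) x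
      _ = ⨆ n, ∫⁻ x in A n, mt' x ∂μ := by simp_rw [lintegral_indicator (hAm _)]
  have hn : ∃ n, T ≤ ∫⁻ x in A n, mt' x ∂μ + ε / 2 := by
    by_cases hle : T ≤ ε / 2
    · exact ⟨0, hle.trans le_add_self⟩
    · push_neg at hle
      have h2 : T - ε / 2 < T := ENNReal.sub_lt_self hT (ne_of_gt (lt_of_le_of_lt (zero_le) hle)) hε2
      rw [hsup] at h2
      obtain ⟨n, hn⟩ := lt_iSup_iff.mp h2
      rw [← hsup] at hn
      exact ⟨n, ((ENNReal.sub_lt_iff_lt_right hε2top hle.le).mp hn).le⟩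
  obtain ⟨n, hn⟩ := hn
  have hsetfin : ∫⁻ x in A n, mt' x ∂μ ≠ ⊤ :=
    ne_top_of_le_ne_top hT (lintegral_mono' Measure.restrict_le_self le_rfl)
  have hAnc : ∫⁻ x in (A n)ᶜ, mt' x ∂μ ≤ ε / 2 := by
    have hadd : ∫⁻ x in A n, mt' x ∂μ + ∫⁻ x in (A n)ᶜ, mt' x ∂μ = T :=
      lintegral_add_compl _ (hAm n)
    rw [← hadd] at hn
    exact (ENNReal.add_le_add_iff_left hsetfin).mp hn
  have hAfin : μ (A n) ≠ ⊤ := by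
    intro htop
    have h1 : ((n : ℝ≥0∞) + 1)⁻¹ * μ (A n) ≤ ∫⁻ x in A n, mt' x ∂μ := by
      rw [← setLIntegral_const (A n) (((n : ℝ≥0∞) + 1)⁻¹)]
      exact setLIntegral_mono hmt'meas fun x hx => (le_of_lt hx)
    rw [htop, ENNReal.mul_top (by simp)] at h1
    exact hsetfin (top_le_iff.mp h1)
  obtain ⟨K, hKA, hKc, hKlt⟩ := (hAm n).exists_isCompact_lt_add hAfin hδ0.ne'
  set C : Set G := closure K with hCdef
  have hCc : IsCompact C := hKc.closure
  have hCm : MeasurableSet C := isClosed_closure.measurableSet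
  have hdiff : μ (A n \ C) < δ := by
    have h1 : μ (A n \ C) + μ (A n ∩ C) = μ (A n) := measure_diff_add_inter _ hCm
    have h2 : μ (A n) < μ (A n ∩ C) + δ :=
      hKlt.trans_le (add_le_add_left (measure_mono (Set.subset_inter hKA subset_closure)) δ)
    rw [← h1, add_comm (μ (A n \ C)) (μ (A n ∩ C))] at h2
    have hfin2 : μ (A n ∩ C) ≠ ⊤ := ne_top_of_le_ne_top hAfin (measure_mono Set.inter_subset_left)
    exact (ENNReal.add_lt_add_iff_left hfin2).mp h2
  have hCsmall : ρ (Cᶜ ×ˢ (Set.univ : Set G)) ≤ ε := by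
    rw [hslice Cᶜ hCm.compl,
      show ∫⁻ x in Cᶜ, mt x ∂μ = ∫⁻ x in Cᶜ, mt' x ∂μ from
        lintegral_congr_ae (ae_restrict_of_ae hmtmt')]
    have hsub : Cᶜ ⊆ (A n)ᶜ ∪ (A n \ C) := by
      intro x hx
      by_cases hA : x ∈ A n
      · exact Or.inr ⟨hA, hx⟩
      · exact Or.inl hA
    calc ∫⁻ x in Cᶜ, mt' x ∂μ
        ≤ ∫⁻ x in (A n)ᶜ ∪ (A n \ C), mt' x ∂μ := lintegral_mono_set hsub
      _ ≤ ∫⁻ x in (A n)ᶜ, mt' x ∂μ + ∫⁻ x in A n \ C, mt' x ∂μ := lintegral_union_le _ _ _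
      _ ≤ ε / 2 + ε / 2 := add_le_add hAnc (hδ _ hdiff).le
      _ = ε := ENNReal.add_halves ε
  -- the truncated set `E` and its nonzero integral
  set E : Set (G × G) := S₀ ∩ C ×ˢ (Set.univ : Set G) with hEdef
  have hE : MeasurableSet E := hS₀m.inter (hCm.prod MeasurableSet.univ)
  set cE : ℂ := ∫ p in E, M p ∂(μ.prod μ) with hcEdef
  have hcompl : (C ×ˢ (Set.univ : Set G))ᶜ = Cᶜ ×ˢ (Set.univ : Set G) := by
    ext ⟨a, b⟩
    simp
  have hcE : cE ≠ 0 := by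
    intro h0
    have hsplit : cE + ∫ p in S₀ \ C ×ˢ (Set.univ : Set G), M p ∂(μ.prod μ) = I₀ :=
      integral_inter_add_diff (hCm.prod MeasurableSet.univ) hM.integrableOn
    rw [h0, zero_add] at hsplit
    have hle : (‖I₀‖₊ : ℝ≥0∞) ≤ ε := by
      rw [← hsplit]
      calc (‖∫ p in S₀ \ C ×ˢ (Set.univ : Set G), M p ∂(μ.prod μ)‖₊ : ℝ≥0∞)
          ≤ ρ (S₀ \ C ×ˢ (Set.univ : Set G)) :=
            key_norm _ (hS₀m.diff (hCm.prod MeasurableSet.univ))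
        _ ≤ ρ (Cᶜ ×ˢ (Set.univ : Set G)) := by
            apply measure_mono
            rw [← hcompl]
            exact fun p hp => hp.2
        _ ≤ ε := hCsmall
    have : (‖I₀‖₊ : ℝ≥0∞) < (‖I₀‖₊ : ℝ≥0∞) :=
      lt_of_le_of_lt hle (ENNReal.half_lt_self hI₀n ENNReal.coe_ne_top)
    exact absurd this (lt_irrefl _)
  -- the pointwise lower bound coming from the invariance hypothesis
  have hpt : ∀ x : G, (‖cE‖₊ : ℝ≥0∞) ≤ ρ (((fun s => x * s) ⁻¹' C) ×ˢ (Set.univ : Set G)) := by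
    intro x
    have hΦ : Measurable fun p : G × G => (x * p.1, p.2 * x⁻¹) := by
      apply Measurable.prodMk
      · exact ((continuous_const.mul continuous_id).measurable).comp measurable_fst
      · exact ((continuous_id.mul continuous_const).measurable).comp measurable_snd
    have hpre : MeasurableSet ((fun p : G × G => (x * p.1, p.2 * x⁻¹)) ⁻¹' E) := hΦ hE
    have h1 := hinv x E hE
    calc (‖cE‖₊ : ℝ≥0∞)
        = (‖∫ p in (fun p : G × G => (x * p.1, p.2 * x⁻¹)) ⁻¹' E, M p ∂(μ.prod μ)‖₊ : ℝ≥0∞) := by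
          rw [h1]
      _ ≤ ρ ((fun p : G × G => (x * p.1, p.2 * x⁻¹)) ⁻¹' E) := key_norm _ hpre
      _ ≤ ρ (((fun s => x * s) ⁻¹' C) ×ˢ (Set.univ : Set G)) := by
          apply measure_mono
          rintro ⟨s, t⟩ hp
          exact ⟨(hp.2).1, trivial⟩
  -- build `N` pairwise disjoint sets each of mass at least `‖cE‖`
  have hcE0 : (‖cE‖₊ : ℝ≥0∞) ≠ 0 := by
    simp only [ne_eq, ENNReal.coe_eq_zero, nnnorm_eq_zero]
    exact hcE
  obtain ⟨N, hN⟩ := ENNReal.exists_nat_mul_gt hcE0 hρuniv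
  set D : Set G := C * C⁻¹ ∪ (C * C⁻¹)⁻¹ with hDdef
  have hD : IsCompact D := (hCc.mul hCc.inv).union (hCc.mul hCc.inv).inv
  obtain ⟨x, hx⟩ := aux_sep_of_noncompact hnc D hD N
  set B : Fin N → Set (G × G) :=
    fun i => ((fun s => x i * s) ⁻¹' C) ×ˢ (Set.univ : Set G) with hBdef
  have hBm : ∀ i, MeasurableSet (B i) := by
    intro i
    have : Measurable fun s => x i * s := (continuous_const.mul continuous_id).measurable
    exact (this hCm).prod MeasurableSet.univ
  have hdisj : Pairwise (Function.onFun Disjoint B) := by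
    intro i j hij
    refine Set.disjoint_left.2 ?_
    rintro ⟨s, t⟩ hpi hpj
    have h1 : x i * s ∈ C := hpi.1
    have h2 : x j * s ∈ C := hpj.1
    have hmem : x (j : ℕ) * (x (i : ℕ))⁻¹ ∈ C * C⁻¹ := by
      have heq : x (j : ℕ) * (x (i : ℕ))⁻¹ = (x (j : ℕ) * s) * (x (i : ℕ) * s)⁻¹ := by group
      rw [heq]
      exact Set.mul_mem_mul h2 (Set.inv_mem_inv.2 h1)
    rcases lt_or_gt_of_ne (fun h : (i : ℕ) = (j : ℕ) => hij (Fin.ext h)) with hlt | hgt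
    · exact hx i j hlt j.isLt (Set.mem_union_left _ hmem)
    · refine hx j i hgt i.isLt (Set.mem_union_right _ ?_)
      have : (x (j : ℕ) * (x (i : ℕ))⁻¹)⁻¹ = x (i : ℕ) * (x (j : ℕ))⁻¹ := by group
      rw [← this]
      exact Set.inv_mem_inv.2 hmem
  have hsum : (N : ℝ≥0∞) * (‖cE‖₊ : ℝ≥0∞) ≤ ρ Set.univ := by
    calc (N : ℝ≥0∞) * (‖cE‖₊ : ℝ≥0∞)
        = ∑ _i : Fin N, (‖cE‖₊ : ℝ≥0∞) := by
          rw [Finset.sum_const, Finset.card_univ, Fintype.card_fin, nsmul_eq_mul]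
      _ ≤ ∑ i : Fin N, ρ (B i) := Finset.sum_le_sum fun i _ => hpt (x i)
      _ = ∑' i : Fin N, ρ (B i) := (tsum_fintype _).symm
      _ = ρ (⋃ i, B i) := (measure_iUnion hdisj hBm).symm
      _ ≤ ρ Set.univ := measure_mono (Set.subset_univ _)
  exact absurd hsum hN.not_ge
end

section
/- Let G be a group acting on the right by homeomorphisms on a compact Hausdorff space T, and let M(T) denote the space of complex regular Borel measures on T with the total variation norm, regarded as a right G-module via pushforward (μ·g is the pushforward of μ under the homeomorphism t ↦ t·g⁻¹, equivalently (μ·g)(f) = μ(t ↦ f(t·g⁻¹)) for f ∈ C(T)). Suppose (φ_i) is a net in M(T) satisfying: (i) inf_i ‖φ_i‖ > 0; and (ii) ‖φ_i·g − φ_i‖ → 0 for every g ∈ G. Then there exists a regular Borel probability measure n on T with n·g = n for every g ∈ G. -/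
noncomputable section

open Filter Topology

universe u

/-- A (nonempty) directed set, serving as the index of a net. -/
structure DirSet : Type (u + 1) where
  carrier : Type u
  [pre : Preorder carrier]
  [ne : Nonempty carrier]
  directed : ∀ i j : carrier, ∃ k : carrier, i ≤ k ∧ j ≤ k

attribute [instance] DirSet.pre DirSet.ne

open MeasureTheory

variable {T : Type*} [TopologicalSpace T] [CompactSpace T] [T2Space T]

/-- Precomposition with a homeomorphism, as a continuous linear endomorphism of `C(T, ℂ)`. -/
def precompCLM (σ : T ≃ₜ T) : C(T, ℂ) →L[ℂ] C(T, ℂ) :=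
  LinearMap.mkContinuous
    { toFun := fun f => f.comp ⟨σ, σ.continuous⟩
      map_add' := fun _ _ => rfl
      map_smul' := fun _ _ => rfl }
    1
    (fun f => by
      rw [one_mul]
      refine (ContinuousMap.norm_le _ (norm_nonneg f)).mpr fun t => ?_
      exact f.norm_coe_le_norm (σ t))

/-- The right action of a group element on `M(T)`, the space of Radon (complex regular
Borel) measures on `T`, realized as the dual of `C(T, ℂ)` (Riesz representation):
`(μ • g) f = μ (t ↦ f (t • g⁻¹))`, i.e. the pushforward of `μ` under `t ↦ t • g⁻¹`. -/
def measAct {G : Type*} [Group G] (ρ : G → T ≃ₜ T) (μ : C(T, ℂ) →L[ℂ] ℂ) (g : G) :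
    C(T, ℂ) →L[ℂ] ℂ :=
  μ.comp (precompCLM (ρ g⁻¹))

set_option linter.unusedSectionVars false
set_option maxHeartbeats 1000000

namespace St18

open Set TopologicalSpace
open scoped NNReal ENNReal


/-- The set of values `‖φ g‖` over test functions `g` dominated by `f`. -/
def TVset (φ : C(T, ℂ) →L[ℂ] ℂ) (f : C(T, ℝ)) : Set ℝ :=
  {r | ∃ g : C(T, ℂ), (∀ t, ‖g t‖ ≤ f t) ∧ r = ‖φ g‖}

/-- The total variation of `φ` evaluated at a nonnegative `f`. -/
def TV (φ : C(T, ℂ) →L[ℂ] ℂ) (f : C(T, ℝ)) : ℝ := sSup (TVset φ f)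

lemma zero_mem_TVset {φ : C(T, ℂ) →L[ℂ] ℂ} {f : C(T, ℝ)} (hf : 0 ≤ f) :
    (0 : ℝ) ∈ TVset φ f :=
  ⟨0, fun t => by simpa using (ContinuousMap.le_def.mp hf t), by simp⟩

lemma TVset_nonempty {φ : C(T, ℂ) →L[ℂ] ℂ} {f : C(T, ℝ)} (hf : 0 ≤ f) :
    (TVset φ f).Nonempty := ⟨0, zero_mem_TVset hf⟩

lemma norm_le_of_dom {f : C(T, ℝ)} {g : C(T, ℂ)} (hg : ∀ t, ‖g t‖ ≤ f t) : ‖g‖ ≤ ‖f‖ := by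
  refine (ContinuousMap.norm_le _ (norm_nonneg f)).mpr fun t => ?_
  exact (hg t).trans ((le_abs_self _).trans (f.norm_coe_le_norm t))

lemma TVset_bddAbove (φ : C(T, ℂ) →L[ℂ] ℂ) (f : C(T, ℝ)) : BddAbove (TVset φ f) := by
  refine ⟨‖φ‖ * ‖f‖, ?_⟩
  rintro r ⟨g, hg, rfl⟩
  exact (φ.le_opNorm g).trans (mul_le_mul_of_nonneg_left (norm_le_of_dom hg) (norm_nonneg φ))

lemma le_TV {φ : C(T, ℂ) →L[ℂ] ℂ} {f : C(T, ℝ)} {r : ℝ} (hr : r ∈ TVset φ f) :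
    r ≤ TV φ f := le_csSup (TVset_bddAbove φ f) hr

lemma TV_nonneg {φ : C(T, ℂ) →L[ℂ] ℂ} {f : C(T, ℝ)} (hf : 0 ≤ f) : 0 ≤ TV φ f :=
  le_TV (zero_mem_TVset hf)

lemma TV_le {φ : C(T, ℂ) →L[ℂ] ℂ} {f : C(T, ℝ)} (hf : 0 ≤ f) {B : ℝ}
    (hB : ∀ g : C(T, ℂ), (∀ t, ‖g t‖ ≤ f t) → ‖φ g‖ ≤ B) : TV φ f ≤ B := by
  refine csSup_le (TVset_nonempty hf) ?_
  rintro r ⟨g, hg, rfl⟩; exact hB g hg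

lemma TV_le_norm_mul {φ : C(T, ℂ) →L[ℂ] ℂ} {f : C(T, ℝ)} (hf : 0 ≤ f) :
    TV φ f ≤ ‖φ‖ * ‖f‖ :=
  TV_le hf fun g hg => (φ.le_opNorm g).trans
    (mul_le_mul_of_nonneg_left (norm_le_of_dom hg) (norm_nonneg φ))

lemma TV_mono (φ : C(T, ℂ) →L[ℂ] ℂ) {f₁ f₂ : C(T, ℝ)} (hf₁ : 0 ≤ f₁)
    (h : ∀ t, f₁ t ≤ f₂ t) : TV φ f₁ ≤ TV φ f₂ :=
  TV_le hf₁ fun g hg => le_TV ⟨g, fun t => (hg t).trans (h t), rfl⟩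

lemma TV_one (φ : C(T, ℂ) →L[ℂ] ℂ) : TV φ (1 : C(T, ℝ)) = ‖φ‖ := by
  have h1 : (0 : C(T, ℝ)) ≤ 1 := by
    intro t; simp
  refine le_antisymm (TV_le h1 fun g hg => ?_) ?_
  · calc ‖φ g‖ ≤ ‖φ‖ * ‖g‖ := φ.le_opNorm g
    _ ≤ ‖φ‖ * 1 := mul_le_mul_of_nonneg_left
        ((ContinuousMap.norm_le _ zero_le_one).mpr fun t => by simpa using hg t)
        (norm_nonneg _)
    _ = ‖φ‖ := mul_one _
  · refine φ.opNorm_le_bound (TV_nonneg h1) fun g => ?_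
    rcases eq_or_ne g 0 with rfl | hg0
    · simp
    · have hgn : 0 < ‖g‖ := norm_pos_iff.mpr hg0
      have hmem : ‖φ ((‖g‖⁻¹ : ℂ) • g)‖ ∈ TVset φ (1 : C(T, ℝ)) := by
        refine ⟨(‖g‖⁻¹ : ℂ) • g, fun t => ?_, rfl⟩
        simp only [ContinuousMap.smul_apply, norm_smul]
        rw [show ((1 : C(T,ℝ)) t) = 1 from rfl]
        calc ‖(‖g‖⁻¹ : ℂ)‖ * ‖g t‖ = ‖g‖⁻¹ * ‖g t‖ := by
              norm_num
          _ ≤ ‖g‖⁻¹ * ‖g‖ := by gcongr; exact g.norm_coe_le_norm t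
          _ = 1 := inv_mul_cancel₀ hgn.ne'
      have := le_TV hmem
      rw [φ.map_smul, norm_smul] at this
      have : ‖g‖⁻¹ * ‖φ g‖ ≤ TV φ 1 := by
        simpa using this
      calc ‖φ g‖ = ‖g‖ * (‖g‖⁻¹ * ‖φ g‖) := by field_simp
      _ ≤ ‖g‖ * TV φ 1 := by gcongr
      _ = TV φ 1 * ‖g‖ := mul_comm _ _

lemma TV_lipschitz (φ φ' : C(T, ℂ) →L[ℂ] ℂ) {f : C(T, ℝ)} (hf : 0 ≤ f) :
    TV φ f ≤ TV φ' f + ‖φ - φ'‖ * ‖f‖ := by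
  refine TV_le hf fun g hg => ?_
  calc ‖φ g‖ = ‖φ' g + (φ - φ') g‖ := by simp
  _ ≤ ‖φ' g‖ + ‖(φ - φ') g‖ := norm_add_le _ _
  _ ≤ TV φ' f + ‖φ - φ'‖ * ‖f‖ := by
      gcongr
      · exact le_TV ⟨g, hg, rfl⟩
      · exact ((φ - φ').le_opNorm g).trans
          (mul_le_mul_of_nonneg_left (norm_le_of_dom hg) (norm_nonneg _))



lemma exists_lt_TV {φ : C(T, ℂ) →L[ℂ] ℂ} {f : C(T, ℝ)} (hf : ∀ t, 0 ≤ f t) {e : ℝ}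
    (he : e < TV φ f) : ∃ r ∈ TVset φ f, e < r :=
  exists_lt_of_lt_csSup ⟨0, 0, fun t => by simpa using hf t, by simp⟩ he

lemma TV_add (φ : C(T, ℂ) →L[ℂ] ℂ) {f₁ f₂ : C(T, ℝ)} (hf₁ : 0 ≤ f₁) (hf₂ : 0 ≤ f₂) :
    TV φ (f₁ + f₂) = TV φ f₁ + TV φ f₂ := by
  have hf₁' : ∀ t, 0 ≤ f₁ t := fun t => by simpa using ContinuousMap.le_def.mp hf₁ t
  have hf₂' : ∀ t, 0 ≤ f₂ t := fun t => by simpa using ContinuousMap.le_def.mp hf₂ t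
  have hf12 : (0 : C(T, ℝ)) ≤ f₁ + f₂ := by
    intro t; simpa using add_nonneg (hf₁' t) (hf₂' t)
  refine le_antisymm ?_ ?_
  · -- subadditivity
    refine TV_le hf12 fun g hg => ?_
    refine le_of_forall_pos_le_add fun ε hε => ?_
    set δ : ℝ := ε / (‖φ‖ + 1) with hδdef
    have hδ : 0 < δ := div_pos hε (by positivity)
    set D : T → ℝ := fun t => f₁ t + f₂ t + δ with hD
    have hDpos : ∀ t, 0 < D t := fun t => by
      have := add_nonneg (hf₁' t) (hf₂' t); simp only [hD]; linarith
    have hDc : Continuous D := by fun_prop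
    have hq : ∀ (fk : C(T, ℝ)), Continuous fun t => (((fk t / D t : ℝ) : ℂ) * g t) := by
      intro fk
      have : Continuous fun t => fk t / D t := fk.continuous.div hDc fun t => (hDpos t).ne'
      exact (Complex.continuous_ofReal.comp this).mul g.continuous
    have hgD : ∀ t, ‖g t‖ ≤ D t := fun t => by
      have := hg t
      simp only [ContinuousMap.add_apply] at this
      simp only [hD]; linarith
    set h₁ : C(T, ℂ) := ⟨_, hq f₁⟩ with hh₁
    set h₂ : C(T, ℂ) := ⟨_, hq f₂⟩ with hh₂
    have hdom : ∀ (fk : C(T, ℝ)), (∀ t, 0 ≤ fk t) →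
        ∀ t, ‖(((fk t / D t : ℝ) : ℂ) * g t)‖ ≤ fk t := by
      intro fk hfk t
      rw [norm_mul, Complex.norm_real, Real.norm_of_nonneg (div_nonneg (hfk t) (hDpos t).le)]
      calc fk t / D t * ‖g t‖ ≤ fk t / D t * D t := by
            have := div_nonneg (hfk t) (hDpos t).le
            exact mul_le_mul_of_nonneg_left (hgD t) this
      _ = fk t := div_mul_cancel₀ _ (hDpos t).ne'
    set r : C(T, ℂ) := g - h₁ - h₂ with hr
    have hrval : ∀ t, r t = ((δ / D t : ℝ) : ℂ) * g t := by
      intro t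
      have key : (1 : ℝ) - f₁ t / D t - f₂ t / D t = δ / D t := by
        have hne := (hDpos t).ne'
        rw [eq_div_iff hne, sub_mul, sub_mul, one_mul, div_mul_cancel₀ _ hne,
          div_mul_cancel₀ _ hne]
        simp only [hD]
        ring
      have : r t = ((1 - f₁ t / D t - f₂ t / D t : ℝ) : ℂ) * g t := by
        simp only [hr, hh₁, hh₂, ContinuousMap.sub_apply, ContinuousMap.coe_mk]
        push_cast
        ring
      rw [this, key]
    have hrnorm : ‖r‖ ≤ δ := by
      refine (ContinuousMap.norm_le _ hδ.le).mpr fun t => ?_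
      rw [hrval t, norm_mul, Complex.norm_real,
        Real.norm_of_nonneg (div_nonneg hδ.le (hDpos t).le)]
      calc δ / D t * ‖g t‖ ≤ δ / D t * D t :=
            mul_le_mul_of_nonneg_left (hgD t) (div_nonneg hδ.le (hDpos t).le)
      _ = δ := div_mul_cancel₀ _ (hDpos t).ne'
    have hsplit : g = h₁ + h₂ + r := by
      ext t; simp only [hr, ContinuousMap.add_apply, ContinuousMap.sub_apply]; ring
    calc ‖φ g‖ = ‖φ h₁ + φ h₂ + φ r‖ := by rw [hsplit]; simp
    _ ≤ ‖φ h₁‖ + ‖φ h₂‖ + ‖φ r‖ := norm_add₃_le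
    _ ≤ TV φ f₁ + TV φ f₂ + ε := by
        gcongr
        · exact le_TV ⟨h₁, hdom f₁ hf₁', rfl⟩
        · exact le_TV ⟨h₂, hdom f₂ hf₂', rfl⟩
        · calc ‖φ r‖ ≤ ‖φ‖ * ‖r‖ := φ.le_opNorm r
          _ ≤ ‖φ‖ * δ := mul_le_mul_of_nonneg_left hrnorm (norm_nonneg _)
          _ ≤ ε := by
              rw [hδdef]
              rw [mul_div_assoc'] at *
              rw [div_le_iff₀ (by positivity)]
              nlinarith [norm_nonneg φ, hε.le]
  · -- superadditivity
    refine le_of_forall_pos_le_add fun ε hε => ?_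
    have h₁ : ∃ r₁ ∈ TVset φ f₁, TV φ f₁ - ε / 2 < r₁ :=
      exists_lt_TV hf₁' (by linarith [half_pos hε])
    have h₂ : ∃ r₂ ∈ TVset φ f₂, TV φ f₂ - ε / 2 < r₂ :=
      exists_lt_TV hf₂' (by linarith [half_pos hε])
    obtain ⟨r₁, ⟨g₁, hg₁, rfl⟩, hr₁⟩ := h₁
    obtain ⟨r₂, ⟨g₂, hg₂, rfl⟩, hr₂⟩ := h₂
    have phase : ∀ x : ℂ, ∃ c : ℂ, ‖c‖ = 1 ∧ c * x = (‖x‖ : ℂ) := by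
      intro x
      rcases eq_or_ne x 0 with rfl | hx
      · exact ⟨1, by simp, by simp⟩
      · refine ⟨(‖x‖ : ℂ) / x, ?_, div_mul_cancel₀ _ hx⟩
        rw [norm_div, Complex.norm_real, Real.norm_of_nonneg (norm_nonneg x)]
        exact div_self (norm_ne_zero_iff.mpr hx)
    obtain ⟨c₁, hc₁, hc₁'⟩ := phase (φ g₁)
    obtain ⟨c₂, hc₂, hc₂'⟩ := phase (φ g₂)
    have hmem : ‖φ (c₁ • g₁ + c₂ • g₂)‖ ∈ TVset φ (f₁ + f₂) := by
      refine ⟨c₁ • g₁ + c₂ • g₂, fun t => ?_, rfl⟩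
      simp only [ContinuousMap.add_apply, ContinuousMap.smul_apply, ContinuousMap.coe_add]
      calc ‖c₁ • g₁ t + c₂ • g₂ t‖ ≤ ‖c₁ • g₁ t‖ + ‖c₂ • g₂ t‖ := norm_add_le _ _
      _ = ‖g₁ t‖ + ‖g₂ t‖ := by rw [norm_smul, norm_smul, hc₁, hc₂, one_mul, one_mul]
      _ ≤ f₁ t + f₂ t := add_le_add (hg₁ t) (hg₂ t)
    have hval : ‖φ (c₁ • g₁ + c₂ • g₂)‖ = ‖φ g₁‖ + ‖φ g₂‖ := by
      have : φ (c₁ • g₁ + c₂ • g₂) = ((‖φ g₁‖ + ‖φ g₂‖ : ℝ) : ℂ) := by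
        rw [map_add, φ.map_smul, φ.map_smul]
        push_cast
        rw [smul_eq_mul, smul_eq_mul, hc₁', hc₂']
      rw [this, Complex.norm_real, Real.norm_of_nonneg (by positivity)]
    have := le_TV hmem
    rw [hval] at this
    linarith

lemma TV_comp (φ : C(T, ℂ) →L[ℂ] ℂ) (σ : T ≃ₜ T) (f : C(T, ℝ)) :
    TV (φ.comp (precompCLM σ)) f = TV φ (f.comp ⟨⇑σ, σ.continuous⟩) := by
  unfold TV
  congr 1
  ext r
  constructor
  · rintro ⟨h, hh, rfl⟩
    refine ⟨h.comp ⟨⇑σ, σ.continuous⟩, fun t => ?_, rfl⟩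
    exact hh (σ t)
  · rintro ⟨k, hk, rfl⟩
    refine ⟨k.comp ⟨⇑σ.symm, σ.symm.continuous⟩, fun t => ?_, ?_⟩
    · simpa using (hk (σ.symm t)).trans (by rw [ContinuousMap.comp_apply]; simp)
    · congr 1
      show φ _ = φ _
      congr 1
      ext t
      show k t = k (σ.symm (σ t))
      rw [σ.symm_apply_apply]

/-- From a monotone, additive, normalized, `G`-invariant positive functional on nonnegative
continuous functions, produce an invariant regular probability measure. -/
theorem exists_invariant_of_state [MeasurableSpace T] [BorelSpace T]
    (G : Type*) [Group G] (ρ : G → T ≃ₜ T)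
    (hρ_mul : ∀ (g h : G) (t : T), ρ (g * h) t = ρ h (ρ g t))
    (hρ_one : ∀ t : T, ρ 1 t = t)
    (m : C(T, ℝ) → ℝ)
    (hmono : ∀ f₁ f₂ : C(T, ℝ), 0 ≤ f₁ → (∀ t, f₁ t ≤ f₂ t) → m f₁ ≤ m f₂)
    (hadd : ∀ f₁ f₂ : C(T, ℝ), 0 ≤ f₁ → 0 ≤ f₂ → m (f₁ + f₂) = m f₁ + m f₂)
    (hone : m 1 = 1)
    (hinvm : ∀ (g : G) (f : C(T, ℝ)), 0 ≤ f →
      m (f.comp ⟨⇑(ρ g⁻¹), (ρ g⁻¹).continuous⟩) = m f) :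
    ∃ n : Measure T, IsProbabilityMeasure n ∧ n.Regular ∧
      ∀ g : G, n.map (fun t => ρ g⁻¹ t) = n := by
  classical
  have hmzero : m 0 = 0 := by
    have := hadd 0 0 le_rfl le_rfl
    simpa using this
  have hnn : ∀ f : C(T, ℝ), 0 ≤ f → 0 ≤ m f := by
    intro f hf
    have := hmono 0 f le_rfl fun t => by simpa using ContinuousMap.le_def.mp hf t
    simpa [hmzero] using this
  have h01 : (0 : C(T, ℝ)) ≤ 1 := ContinuousMap.le_def.mpr fun t => by simp
  -- the value set of a compact set
  set mS : Compacts T → Set ℝ := fun K =>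
    {r | ∃ f : C(T, ℝ), 0 ≤ f ∧ (∀ x ∈ (K : Set T), 1 ≤ f x) ∧ m f = r} with hmS
  have hone_mem : ∀ K : Compacts T, (1 : ℝ) ∈ mS K := fun K =>
    ⟨1, h01, fun x _ => le_rfl, hone⟩
  have hbdd : ∀ K : Compacts T, BddBelow (mS K) := by
    rintro K
    exact ⟨0, by rintro r ⟨f, hf, _, rfl⟩; exact hnn f hf⟩
  set lam : Compacts T → ℝ := fun K => sInf (mS K) with hlam
  have lam_nonneg : ∀ K, 0 ≤ lam K := fun K =>
    le_csInf ⟨1, hone_mem K⟩ (by rintro r ⟨f, hf, _, rfl⟩; exact hnn f hf)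
  have lam_le : ∀ (K : Compacts T) {r : ℝ}, r ∈ mS K → lam K ≤ r := by
    intro K r hr
    exact csInf_le (hbdd K) hr
  have lam_mono : ∀ K₁ K₂ : Compacts T, (K₁ : Set T) ⊆ K₂ → lam K₁ ≤ lam K₂ := by
    intro K₁ K₂ h
    refine csInf_le_csInf (hbdd K₁) ⟨1, hone_mem K₂⟩ ?_
    rintro r ⟨f, hf, hf1, rfl⟩
    exact ⟨f, hf, fun x hx => hf1 x (h hx), rfl⟩
  have lam_sup_le : ∀ K₁ K₂ : Compacts T, lam (K₁ ⊔ K₂) ≤ lam K₁ + lam K₂ := by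
    intro K₁ K₂
    refine le_of_forall_pos_le_add fun ε hε => ?_
    obtain ⟨r₁, hr₁, hr₁'⟩ :=
      exists_lt_of_csInf_lt (s := mS K₁) ⟨1, hone_mem K₁⟩
        (lt_add_of_pos_right _ (half_pos hε))
    obtain ⟨r₂, hr₂, hr₂'⟩ :=
      exists_lt_of_csInf_lt (s := mS K₂) ⟨1, hone_mem K₂⟩
        (lt_add_of_pos_right _ (half_pos hε))
    obtain ⟨f₁, hf₁, hf₁1, rfl⟩ := hr₁
    obtain ⟨f₂, hf₂, hf₂1, rfl⟩ := hr₂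
    have hmem : m (f₁ + f₂) ∈ mS (K₁ ⊔ K₂) := by
      refine ⟨f₁ + f₂, add_nonneg hf₁ hf₂, ?_, rfl⟩
      intro x hx
      have hx' : x ∈ (K₁ : Set T) ∪ (K₂ : Set T) := hx
      have h1 : ∀ t, 0 ≤ f₁ t := fun t => by simpa using ContinuousMap.le_def.mp hf₁ t
      have h2 : ∀ t, 0 ≤ f₂ t := fun t => by simpa using ContinuousMap.le_def.mp hf₂ t
      rcases hx' with hx' | hx'
      · have := hf₁1 x hx'; simp only [ContinuousMap.add_apply]; linarith [h2 x]
      · have := hf₂1 x hx'; simp only [ContinuousMap.add_apply]; linarith [h1 x]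
    have := lam_le _ hmem
    rw [hadd f₁ f₂ hf₁ hf₂] at this
    linarith
  have lam_sup_disjoint : ∀ K₁ K₂ : Compacts T, Disjoint (K₁ : Set T) K₂ →
      lam (K₁ ⊔ K₂) = lam K₁ + lam K₂ := by
    intro K₁ K₂ hdis
    refine le_antisymm (lam_sup_le K₁ K₂) ?_
    refine le_csInf ⟨1, hone_mem _⟩ ?_
    rintro r ⟨f, hf, hf1, rfl⟩
    obtain ⟨u, hu0, hu1, hu01⟩ :=
      exists_continuous_zero_one_of_isClosed K₁.isCompact.isClosed K₂.isCompact.isClosed hdis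
    have hfpt : ∀ t, 0 ≤ f t := fun t => by simpa using ContinuousMap.le_def.mp hf t
    set f₁ : C(T, ℝ) := f * (1 - u) with hf₁def
    set f₂ : C(T, ℝ) := f * u with hf₂def
    have hf₁ : (0 : C(T, ℝ)) ≤ f₁ := by
      rw [ContinuousMap.le_def]
      intro t
      have := (hu01 t).2
      simp only [hf₁def, ContinuousMap.mul_apply, ContinuousMap.sub_apply,
        ContinuousMap.one_apply, ContinuousMap.zero_apply]
      nlinarith [hfpt t]
    have hf₂ : (0 : C(T, ℝ)) ≤ f₂ := by
      rw [ContinuousMap.le_def]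
      intro t
      have := (hu01 t).1
      simp only [hf₂def, ContinuousMap.mul_apply, ContinuousMap.zero_apply]
      nlinarith [hfpt t]
    have hsum : f₁ + f₂ = f := by
      ext t
      simp only [hf₁def, hf₂def, ContinuousMap.add_apply, ContinuousMap.mul_apply,
        ContinuousMap.sub_apply, ContinuousMap.one_apply]
      ring
    have h₁mem : m f₁ ∈ mS K₁ := by
      refine ⟨f₁, hf₁, fun x hx => ?_, rfl⟩
      have hu : u x = 0 := hu0 hx
      have := hf1 x (Or.inl hx)
      simp only [hf₁def, ContinuousMap.mul_apply, ContinuousMap.sub_apply,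
        ContinuousMap.one_apply, hu]
      linarith
    have h₂mem : m f₂ ∈ mS K₂ := by
      refine ⟨f₂, hf₂, fun x hx => ?_, rfl⟩
      have hu : u x = 1 := hu1 hx
      have := hf1 x (Or.inr hx)
      simp only [hf₂def, ContinuousMap.mul_apply, hu]
      linarith
    have : m f = m f₁ + m f₂ := by rw [← hsum, hadd f₁ f₂ hf₁ hf₂]
    rw [this]
    exact add_le_add (lam_le _ h₁mem) (lam_le _ h₂mem)
  -- the content
  set μc : Content T :=
    { toFun := fun K => (lam K).toNNReal
      mono' := fun K₁ K₂ h => Real.toNNReal_mono (lam_mono K₁ K₂ h)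
      sup_disjoint' := fun K₁ K₂ hdis _ _ => by
        rw [lam_sup_disjoint K₁ K₂ hdis,
          Real.toNNReal_add (lam_nonneg K₁) (lam_nonneg K₂)]
      sup_le' := fun K₁ K₂ => by
        rw [← Real.toNNReal_add (lam_nonneg K₁) (lam_nonneg K₂)]
        exact Real.toNNReal_mono (lam_sup_le K₁ K₂) } with hμc
  refine ⟨μc.measure, ?_, inferInstance, ?_⟩
  · -- probability
    constructor
    have h1 : μc.measure univ = μc.outerMeasure univ :=
      μc.measure_apply MeasurableSet.univ
    have h2 : μc.outerMeasure univ = μc.innerContent ⟨univ, isOpen_univ⟩ :=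
      μc.outerMeasure_of_isOpen univ isOpen_univ
    have h3 : μc.innerContent ⟨univ, isOpen_univ⟩ = μc ⟨univ, isCompact_univ⟩ :=
      μc.innerContent_of_isCompact isCompact_univ isOpen_univ
    have h4 : lam ⟨univ, isCompact_univ⟩ = 1 := by
      refine le_antisymm (lam_le _ (hone_mem _)) ?_
      refine le_csInf ⟨1, hone_mem _⟩ ?_
      rintro r ⟨f, hf, hf1, rfl⟩
      have := hmono 1 f h01 fun t => hf1 t trivial
      rw [hone] at this
      exact this
    rw [h1, h2, h3]
    show ((lam ⟨univ, isCompact_univ⟩).toNNReal : ℝ≥0∞) = 1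
    rw [h4]
    simp
  · -- invariance
    intro g
    set σ : T ≃ₜ T := ρ g⁻¹ with hσ
    have hσ' : ∀ f : C(T, ℝ), 0 ≤ f →
        m (f.comp ⟨⇑σ.symm, σ.symm.continuous⟩) = m f := by
      intro f hf
      have h1 : (f.comp ⟨⇑σ.symm, σ.symm.continuous⟩)
          = f.comp ⟨⇑(ρ g⁻¹⁻¹), (ρ g⁻¹⁻¹).continuous⟩ := by
        ext t
        have ht : σ.symm t = ρ g⁻¹⁻¹ t := by
          rw [inv_inv]
          refine σ.symm_apply_eq.mpr ?_
          have := hρ_mul g g⁻¹ t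
          rw [mul_inv_cancel, hρ_one] at this
          exact this
        simp only [ContinuousMap.comp_apply, ContinuousMap.coe_mk]
        rw [ht]
      rw [h1]
      exact hinvm g⁻¹ f hf
    have hcomp : ∀ K : Compacts T, μc (K.map σ σ.continuous) = μc K := by
      intro K
      have : lam (K.map σ σ.continuous) = lam K := by
        have hsets : mS (K.map σ σ.continuous) = mS K := by
          ext r
          constructor
          · rintro ⟨f, hf, hf1, rfl⟩
            refine ⟨f.comp ⟨⇑σ, σ.continuous⟩, ?_, ?_, hinvm g f hf⟩
            · intro t
              simpa using ContinuousMap.le_def.mp hf (σ t)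
            · intro x hx
              exact hf1 (σ x) ⟨x, hx, rfl⟩
          · rintro ⟨f, hf, hf1, rfl⟩
            have hf' : (0 : C(T, ℝ)) ≤ f.comp ⟨⇑σ.symm, σ.symm.continuous⟩ := by
              intro t
              simpa using ContinuousMap.le_def.mp hf (σ.symm t)
            refine ⟨f.comp ⟨⇑σ.symm, σ.symm.continuous⟩, hf', ?_, hσ' f hf⟩
            rintro x ⟨y, hy, rfl⟩
            simpa [σ.symm_apply_apply] using hf1 y hy
        simp only [hlam, hsets]
      show ((lam (K.map σ σ.continuous)).toNNReal : ℝ≥0∞) = ((lam K).toNNReal : ℝ≥0∞)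
      rw [this]
    refine Measure.ext fun E hE => ?_
    have hσmeas : Measurable (⇑σ) := σ.continuous.measurable
    rw [show (fun t => ρ g⁻¹ t) = ⇑σ from rfl]
    rw [Measure.map_apply hσmeas hE, μc.measure_apply (hσmeas hE),
      μc.measure_apply hE]
    exact μc.outerMeasure_preimage σ hcomp E

end St18

/-- **Statement 18.** Let a group `G` act on the right by homeomorphisms on a compact
Hausdorff space `T` (the homeomorphism for `g` being `ρ g`, so that
`ρ (g h) = ρ h ∘ ρ g` and `ρ 1 = id`).  Suppose `(φ i)` is a net in `M(T)` with
`inf_i ‖φ i‖ > 0` and `‖φ i • g - φ i‖ → 0` for every `g ∈ G`.  Then there is a regular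
Borel probability measure `n` on `T` with `n • g = n` (i.e. the pushforward of `n` under
`t ↦ t • g⁻¹` equals `n`) for every `g ∈ G`. -/
theorem invariant_probability_measure_of_asymptotically_invariant_net
    [MeasurableSpace T] [BorelSpace T]
    (G : Type*) [Group G] (ρ : G → T ≃ₜ T)
    (hρ_mul : ∀ (g h : G) (t : T), ρ (g * h) t = ρ h (ρ g t))
    (hρ_one : ∀ t : T, ρ 1 t = t)
    (d : DirSet) (φ : d.carrier → (C(T, ℂ) →L[ℂ] ℂ))
    (hpos : ∃ c : ℝ, 0 < c ∧ ∀ i, c ≤ ‖φ i‖)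
    (hinv : ∀ g : G, Tendsto (fun i => ‖measAct ρ (φ i) g - φ i‖) atTop (𝓝 0)) :
    ∃ n : Measure T, IsProbabilityMeasure n ∧ n.Regular ∧
      ∀ g : G, n.map (fun t => ρ g⁻¹ t) = n := by
  classical
  obtain ⟨c, hc, hφc⟩ := hpos
  haveI : IsDirected d.carrier (· ≤ ·) := ⟨d.directed⟩
  haveI : (atTop : Filter d.carrier).NeBot := atTop_neBot
  set U : Ultrafilter d.carrier := Ultrafilter.of atTop with hU
  have hUle : (U : Filter d.carrier) ≤ atTop := Ultrafilter.of_le _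
  have hφpos : ∀ i, (0 : ℝ) < ‖φ i‖ := fun i => lt_of_lt_of_le hc (hφc i)
  set ψ : d.carrier → C(T, ℝ) → ℝ := fun i f => St18.TV (φ i) f / ‖φ i‖ with hψ
  have hψ_nonneg : ∀ (i) (f : C(T, ℝ)), 0 ≤ f → 0 ≤ ψ i f := fun i f hf =>
    div_nonneg (St18.TV_nonneg hf) (norm_nonneg _)
  have hψ_le : ∀ (i) (f : C(T, ℝ)), 0 ≤ f → ψ i f ≤ ‖f‖ := by
    intro i f hf
    rw [hψ]
    rw [div_le_iff₀ (hφpos i)]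
    calc St18.TV (φ i) f ≤ ‖φ i‖ * ‖f‖ := St18.TV_le_norm_mul hf
    _ = ‖f‖ * ‖φ i‖ := mul_comm _ _
  -- existence of limits along the ultrafilter
  have hlim : ∀ f : C(T, ℝ), ∃ x : ℝ, 0 ≤ f → Tendsto (fun i => ψ i f) ↑U (𝓝 x) := by
    intro f
    by_cases hf : 0 ≤ f
    · have hmem : ∀ i, ψ i f ∈ Set.Icc (0 : ℝ) ‖f‖ := fun i =>
        ⟨hψ_nonneg i f hf, hψ_le i f hf⟩
      have hle : (U.map fun i => ψ i f : Filter ℝ) ≤ 𝓟 (Set.Icc (0 : ℝ) ‖f‖) := by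
        rw [Filter.le_principal_iff]
        exact Filter.mem_map.mpr (Filter.univ_mem' hmem)
      obtain ⟨x, -, hx⟩ := (isCompact_Icc (a := (0:ℝ)) (b := ‖f‖)).ultrafilter_le_nhds
        (U.map fun i => ψ i f) hle
      exact ⟨x, fun _ => hx⟩
    · exact ⟨0, fun h => absurd h hf⟩
  choose m hm using hlim
  have hmt : ∀ f : C(T, ℝ), 0 ≤ f → Tendsto (fun i => ψ i f) ↑U (𝓝 (m f)) := fun f hf =>
    hm f hf
  -- properties of m
  have hmono : ∀ f₁ f₂ : C(T, ℝ), 0 ≤ f₁ → (∀ t, f₁ t ≤ f₂ t) → m f₁ ≤ m f₂ := by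
    intro f₁ f₂ hf₁ h
    have hf₂ : 0 ≤ f₂ := le_trans hf₁ (ContinuousMap.le_def.mpr h)
    refine le_of_tendsto_of_tendsto' (hmt f₁ hf₁) (hmt f₂ hf₂) fun i => ?_
    have := St18.TV_mono (φ i) hf₁ h
    simp only [hψ]
    exact div_le_div_of_nonneg_right this (hφpos i).le
  have hnn : ∀ f : C(T, ℝ), 0 ≤ f → 0 ≤ m f := by
    intro f hf
    exact ge_of_tendsto (hmt f hf) (Filter.Eventually.of_forall fun i => hψ_nonneg i f hf)
  have hadd : ∀ f₁ f₂ : C(T, ℝ), 0 ≤ f₁ → 0 ≤ f₂ → m (f₁ + f₂) = m f₁ + m f₂ := by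
    intro f₁ f₂ hf₁ hf₂
    have hf12 : (0 : C(T, ℝ)) ≤ f₁ + f₂ := by
      rw [ContinuousMap.le_def]
      intro t
      have h1 := ContinuousMap.le_def.mp hf₁ t
      have h2 := ContinuousMap.le_def.mp hf₂ t
      simp only [ContinuousMap.zero_apply] at h1 h2 ⊢
      simp only [ContinuousMap.add_apply]
      linarith
    refine tendsto_nhds_unique (hmt _ hf12) ?_
    have heq : (fun i => ψ i (f₁ + f₂)) = fun i => ψ i f₁ + ψ i f₂ := by
      funext i
      rw [hψ]
      simp only
      rw [St18.TV_add (φ i) hf₁ hf₂, add_div]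
    rw [heq]
    exact (hmt f₁ hf₁).add (hmt f₂ hf₂)
  have h01 : (0 : C(T, ℝ)) ≤ 1 := ContinuousMap.le_def.mpr fun t => by simp
  have hone : m 1 = 1 := by
    refine tendsto_nhds_unique (hmt 1 h01) ?_
    have heq : (fun i => ψ i (1 : C(T, ℝ))) = fun _ => (1 : ℝ) := by
      funext i
      rw [hψ]
      simp only
      rw [St18.TV_one (φ i), div_self (hφpos i).ne']
    rw [heq]
    exact tendsto_const_nhds
  have hinvm : ∀ (g : G) (f : C(T, ℝ)), 0 ≤ f →
      m (f.comp ⟨⇑(ρ g⁻¹), (ρ g⁻¹).continuous⟩) = m f := by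
    intro g f hf
    set σ : T ≃ₜ T := ρ g⁻¹ with hσdef
    have hfσ : (0 : C(T, ℝ)) ≤ f.comp ⟨⇑σ, σ.continuous⟩ := by
      rw [ContinuousMap.le_def]
      intro t
      simpa using ContinuousMap.le_def.mp hf (σ t)
    -- the difference tends to 0 along atTop, hence along U
    have hdiff : Tendsto (fun i => ψ i (f.comp ⟨⇑σ, σ.continuous⟩) - ψ i f) ↑U (𝓝 0) := by
      have hbound : ∀ i, |ψ i (f.comp ⟨⇑σ, σ.continuous⟩) - ψ i f|
          ≤ ‖measAct ρ (φ i) g - φ i‖ * ‖f‖ / c := by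
        intro i
        have hTV : ∀ i, St18.TV (φ i) (f.comp ⟨⇑σ, σ.continuous⟩) = St18.TV (measAct ρ (φ i) g) f := by
          intro i
          rw [show measAct ρ (φ i) g = (φ i).comp (precompCLM σ) from rfl, St18.TV_comp]
        have h1 : St18.TV (measAct ρ (φ i) g) f ≤ St18.TV (φ i) f + ‖measAct ρ (φ i) g - φ i‖ * ‖f‖ :=
          St18.TV_lipschitz _ _ hf
        have h2 : St18.TV (φ i) f ≤ St18.TV (measAct ρ (φ i) g) f + ‖measAct ρ (φ i) g - φ i‖ * ‖f‖ := by
          have := St18.TV_lipschitz (φ i) (measAct ρ (φ i) g) hf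
          rwa [show ‖φ i - measAct ρ (φ i) g‖ = ‖measAct ρ (φ i) g - φ i‖ from
            norm_sub_rev _ _] at this
        have habs : |St18.TV (measAct ρ (φ i) g) f - St18.TV (φ i) f|
            ≤ ‖measAct ρ (φ i) g - φ i‖ * ‖f‖ := abs_sub_le_iff.mpr ⟨by linarith, by linarith⟩
        rw [hψ]
        simp only
        rw [hTV i, div_sub_div_same, abs_div, abs_of_pos (hφpos i)]
        rw [div_le_div_iff₀ (hφpos i) hc]
        calc |St18.TV (measAct ρ (φ i) g) f - St18.TV (φ i) f| * c
            ≤ (‖measAct ρ (φ i) g - φ i‖ * ‖f‖) * c :=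
              mul_le_mul_of_nonneg_right habs hc.le
          _ ≤ (‖measAct ρ (φ i) g - φ i‖ * ‖f‖) * ‖φ i‖ := by
              have hn : 0 ≤ ‖measAct ρ (φ i) g - φ i‖ * ‖f‖ := by positivity
              exact mul_le_mul_of_nonneg_left (hφc i) hn
      have hz : Tendsto (fun i => ‖measAct ρ (φ i) g - φ i‖ * ‖f‖ / c) atTop (𝓝 0) := by
        have := (hinv g).mul_const ‖f‖
        rw [zero_mul] at this
        have := this.div_const c
        rwa [zero_div] at this
      have : Tendsto (fun i => ψ i (f.comp ⟨⇑σ, σ.continuous⟩) - ψ i f) atTop (𝓝 0) :=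
        squeeze_zero_norm hbound hz
      exact this.mono_left hUle
    have h1 := (hmt _ hfσ).sub (hmt f hf)
    have := tendsto_nhds_unique h1 hdiff
    linarith [this]
  exact St18.exists_invariant_of_state G ρ hρ_mul hρ_one m hmono hadd hone hinvm
end
end
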